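/- arXiv:2503.19521 — 3 statements merged into one kernel-verified Lean document; each statement's English description precedes it below -/
import Mathlib

section
/- Let H : ℝⁿ ⇉ ℝᵐ be a positively homogeneous set-valued mapping with closed graph such that H(0) = {0}. Then dom H = {z : H(z) ≠ ∅} is a closed set. -/
/-!
A positively homogeneous mapping with closed graph and `H 0 = {0}` has linear growth,
`‖y‖ ≤ κ ‖z‖` for `y ∈ H z`: otherwise rescaling violating pairs to `‖y‖ = 1` produces, by
compactness of the unit sphere, a unit vector in `H 0`. Along a sequence `zₖ → z` in the domain
the values `yₖ ∈ H zₖ` are then bounded, so a subsequence converges, and its limit lies in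
`H z` because the graph is closed.
-/

open Filter Topology Pointwise

section PositivelyHomogeneous

variable {E F : Type*} [NormedAddCommGroup E] [NormedAddCommGroup F] {H : E → Set F}

theorem smul_mem_of_posHomogeneous [NormedSpace ℝ E] [NormedSpace ℝ F]
    (hpos : ∀ γ : ℝ, 0 < γ → ∀ z, H (γ • z) = γ • H z)
    {γ : ℝ} (hγ : 0 < γ) {z : E} {y : F} (hy : y ∈ H z) : γ • y ∈ H (γ • z) := by
  rw [hpos γ hγ z]
  exact Set.smul_mem_smul_set hy

theorem exists_norm_le_mul_norm_of_posHomogeneous [NormedSpace ℝ E] [NormedSpace ℝ F]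
    [ProperSpace F]
    (hpos : ∀ γ : ℝ, 0 < γ → ∀ z, H (γ • z) = γ • H z)
    (hclosed : IsClosed {p : E × F | p.2 ∈ H p.1}) (h0 : H 0 ⊆ {0}) :
    ∃ κ : ℝ, 0 ≤ κ ∧ ∀ z, ∀ y ∈ H z, ‖y‖ ≤ κ * ‖z‖ := by
  by_contra! hunbdd
  choose z y hy hlt using fun k : ℕ => hunbdd (k + 1) (by positivity)
  have hy_pos : ∀ k, 0 < ‖y k‖ := fun k => (by positivity : (0 : ℝ) ≤ _).trans_lt (hlt k)
  set t : ℕ → ℝ := fun k => ‖y k‖⁻¹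
  have ht_pos : ∀ k, 0 < t k := fun k => inv_pos.2 (hy_pos k)
  have hunit : ∀ k, t k • y k ∈ Metric.sphere (0 : F) 1 := fun k => by
    simp [t, norm_smul, (hy_pos k).ne']
  have hz_small : ∀ k, ‖t k • z k‖ ≤ 1 / ((k : ℝ) + 1) := fun k => by
    rw [norm_smul, Real.norm_of_nonneg (ht_pos k).le, inv_mul_le_iff₀ (hy_pos k), mul_one_div,
      le_div_iff₀ (by positivity), mul_comm]
    exact (hlt k).le
  have hz_lim : Tendsto (fun k => t k • z k) atTop (𝓝 0) :=
    squeeze_zero_norm hz_small tendsto_one_div_add_atTop_nhds_zero_nat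
  obtain ⟨u, hu, φ, hφ, hu_lim⟩ := (isCompact_sphere (0 : F) 1).tendsto_subseq hunit
  have hu_mem : u ∈ H 0 :=
    hclosed.mem_of_tendsto ((hz_lim.comp hφ.tendsto_atTop).prodMk_nhds hu_lim)
      (Eventually.of_forall fun k => smul_mem_of_posHomogeneous hpos (ht_pos _) (hy _))
  have hu_zero : u = 0 := h0 hu_mem
  simp [hu_zero] at hu

theorem isClosed_dom_of_norm_le_mul_norm [ProperSpace F]
    (hclosed : IsClosed {p : E × F | p.2 ∈ H p.1}) {κ : ℝ} (hκ : 0 ≤ κ)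
    (hbound : ∀ z, ∀ y ∈ H z, ‖y‖ ≤ κ * ‖z‖) :
    IsClosed {z : E | (H z).Nonempty} := by
  refine isSeqClosed_iff_isClosed.1 fun x z hx hxz => ?_
  choose y hy using hx
  obtain ⟨C, hC⟩ := isBounded_iff_forall_norm_le.1 (Metric.isBounded_range_of_tendsto x hxz)
  have hy_ball : ∀ k, y k ∈ Metric.closedBall (0 : F) (κ * C) := fun k => by
    rw [mem_closedBall_zero_iff]
    exact (hbound _ _ (hy k)).trans (mul_le_mul_of_nonneg_left (hC _ ⟨k, rfl⟩) hκ)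
  obtain ⟨w, -, φ, hφ, hw_lim⟩ :=
    (isCompact_closedBall (0 : F) (κ * C)).tendsto_subseq hy_ball
  exact ⟨w, hclosed.mem_of_tendsto ((hxz.comp hφ.tendsto_atTop).prodMk_nhds hw_lim)
    (Eventually.of_forall fun k => hy (φ k))⟩

end PositivelyHomogeneous

/-- For a positively homogeneous closed-graph set-valued mapping
`H : ℝⁿ ⇉ ℝᵐ` with `H 0 = {0}`, the domain of `H` is closed. -/
theorem dom_closed_of_value_at_zero_trivial {n m : ℕ}
    (H : EuclideanSpace ℝ (Fin n) → Set (EuclideanSpace ℝ (Fin m)))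
    (hpos : ∀ γ : ℝ, 0 < γ → ∀ z, H (γ • z) = γ • H z)
    (hclosed : IsClosed {p : EuclideanSpace ℝ (Fin n) × EuclideanSpace ℝ (Fin m) |
      p.2 ∈ H p.1})
    (h0 : H 0 = {0}) :
    IsClosed {z : EuclideanSpace ℝ (Fin n) | (H z).Nonempty} := by
  obtain ⟨κ, hκ, hbound⟩ := exists_norm_le_mul_norm_of_posHomogeneous hpos hclosed h0.subset
  exact isClosed_dom_of_norm_le_mul_norm hclosed hκ hbound
end

section
/- Let Γ : ℝᵏ × ℝᵐ ⇉ ℝ^q be such that for each ξ, the mapping Γ(ξ,·) is positively homogeneous and, for a fixed ξ̄, the graph of Γ is closed, and suppose H(z) := Γ(ξ̄, z) has the special structure H(z) = {0} × 𝒯(z) for a mapping 𝒯 : ℝᵐ ⇉ ℝ^{q-s} with 𝒯(0) = {0} and 𝒯⁻¹(0) = {0}. Then the mapping 𝒦(ξ,z) := cone(Γ(ξ,z)) is outer semicontinuous relative to ℝᵏ × bd(𝔹) at (ξ̄, z) for every unit vector z ∈ dom H: that is, whenever (ξᵏ, zᵏ) → (ξ̄, z) with ‖zᵏ‖ = 1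 and ηᵏ ∈ cone(Γ(ξᵏ, zᵏ)) with ηᵏ → η, one has η ∈ cone(Γ(ξ̄, z)). -/
open Filter Topology Pointwise

/-- The conic hull `cone(Z) = ⋃_{γ ≥ 0} γ • Z`. -/
def coneHull {V : Type*} [AddCommGroup V] [Module ℝ V] (Z : Set V) : Set V :=
  {y | ∃ γ : ℝ, 0 ≤ γ ∧ ∃ x ∈ Z, y = γ • x}

/-!
Write `ηⱼ = γⱼ wⱼ` with `wⱼ ∈ Γ(ξⱼ, zⱼ)` and pass to a subsequence along which either `γⱼ → ∞`
or `γⱼ → c ∈ [0, ∞)`. If `γⱼ → ∞`, then `ηⱼ / γⱼ → 0` and the closed graph gives `0 ∈ Γ(ξ̄, z)`,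
which `𝒯⁻¹(0) = {0}` rules out for a unit vector `z`. If `c > 0`, then `wⱼ = ηⱼ / γⱼ → η / c`,
so `η / c ∈ Γ(ξ̄, z)`. If `c = 0`, homogeneity puts `ηⱼ` in `Γ(ξⱼ, γⱼ zⱼ)` with `γⱼ zⱼ → 0`,
so `η ∈ Γ(ξ̄, 0) = {0}`.
-/

theorem zero_mem_coneHull {V : Type*} [AddCommGroup V] [Module ℝ V] {Z : Set V}
    (hZ : Z.Nonempty) : (0 : V) ∈ coneHull Z :=
  ⟨0, le_rfl, hZ.some, hZ.some_mem, (zero_smul ℝ _).symm⟩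

theorem Real.tendsto_atTop_or_exists_subseq_tendsto {u : ℕ → ℝ} (hu : ∀ n, 0 ≤ u n) :
    Tendsto u atTop atTop ∨
      ∃ c, 0 ≤ c ∧ ∃ φ : ℕ → ℕ, StrictMono φ ∧ Tendsto (u ∘ φ) atTop (𝓝 c) := by
  by_cases htop : Tendsto u atTop atTop
  · exact Or.inl htop
  · obtain ⟨b, hb⟩ : ∃ b, ∃ᶠ n in atTop, u n < b := by
      simpa only [tendsto_atTop, not_forall, not_eventually, not_le] using htop
    obtain ⟨c, hc, φ, hφ, hlim⟩ :=
      isCompact_Icc.tendsto_subseq' (hb.mono fun n h => ⟨hu n, h.le⟩)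
    exact Or.inr ⟨c, hc.1, φ, hφ, hlim⟩

section ClosedGraph

variable {ι X Z V : Type*} [TopologicalSpace X] [TopologicalSpace Z] [TopologicalSpace V]
  {Γ : X → Z → Set V} {l : Filter ι} {ξs : ι → X} {zs : ι → Z} {ξ : X} {z : Z}

theorem mem_of_isClosed_graph_of_tendsto [l.NeBot]
    (hΓ : IsClosed {p : (X × Z) × V | p.2 ∈ Γ p.1.1 p.1.2}) {ηs : ι → V} {η : V}
    (hξ : Tendsto ξs l (𝓝 ξ)) (hz : Tendsto zs l (𝓝 z)) (hη : Tendsto ηs l (𝓝 η))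
    (hmem : ∀ᶠ j in l, ηs j ∈ Γ (ξs j) (zs j)) : η ∈ Γ ξ z :=
  hΓ.mem_of_tendsto ((hξ.prodMk_nhds hz).prodMk_nhds hη) hmem

variable [AddCommGroup V] [Module ℝ V] {γ : ι → ℝ} {w : ι → V} {η : V}

theorem smul_mem_of_isClosed_graph_of_tendsto_inv [l.NeBot] [ContinuousSMul ℝ V]
    (hΓ : IsClosed {p : (X × Z) × V | p.2 ∈ Γ p.1.1 p.1.2})
    (hξ : Tendsto ξs l (𝓝 ξ)) (hz : Tendsto zs l (𝓝 z))
    (hw : ∀ j, w j ∈ Γ (ξs j) (zs j)) (hη : Tendsto (fun j => γ j • w j) l (𝓝 η))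
    {a : ℝ} (ha : Tendsto (fun j => (γ j)⁻¹) l (𝓝 a)) (hγ : ∀ᶠ j in l, γ j ≠ 0) :
    a • η ∈ Γ ξ z := by
  refine mem_of_isClosed_graph_of_tendsto hΓ hξ hz (ha.smul hη) (hγ.mono fun j hj => ?_)
  simpa only [smul_smul, inv_mul_cancel₀ hj, one_smul] using hw j

theorem eq_zero_or_mem_zero_of_isClosed_graph_of_tendsto_zero [l.NeBot] [T2Space V]
    [AddCommGroup Z] [Module ℝ Z] [ContinuousSMul ℝ Z]
    (hpos : ∀ ξ, ∀ γ : ℝ, 0 < γ → ∀ z, Γ ξ (γ • z) = γ • Γ ξ z)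
    (hΓ : IsClosed {p : (X × Z) × V | p.2 ∈ Γ p.1.1 p.1.2})
    (hξ : Tendsto ξs l (𝓝 ξ)) (hz : Tendsto zs l (𝓝 z))
    (hw : ∀ j, w j ∈ Γ (ξs j) (zs j)) (hη : Tendsto (fun j => γ j • w j) l (𝓝 η))
    (hγ : ∀ j, 0 ≤ γ j) (hγ0 : Tendsto γ l (𝓝 0)) :
    η = 0 ∨ η ∈ Γ ξ 0 := by
  by_cases hfreq : ∃ᶠ j in l, γ j = 0
  · refine Or.inl (tendsto_nhds_unique_of_frequently_eq hη tendsto_const_nhds ?_)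
    exact hfreq.mono fun j hj => by simp [hj]
  · have hpos' : ∀ᶠ j in l, 0 < γ j :=
      (not_frequently.mp hfreq).mono fun j hj => (hγ j).lt_of_ne' hj
    refine Or.inr (mem_of_isClosed_graph_of_tendsto (zs := fun j => γ j • zs j) hΓ hξ ?_ hη
      (hpos'.mono fun j hj => ?_))
    · simpa using hγ0.smul hz
    · rw [hpos _ _ hj]
      exact Set.smul_mem_smul_set (hw j)

theorem mem_coneHull_of_isClosed_graph_of_tendsto [ContinuousSMul ℝ V] [T2Space V]
    [AddCommGroup Z] [Module ℝ Z] [ContinuousSMul ℝ Z]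
    (hpos : ∀ ξ, ∀ γ : ℝ, 0 < γ → ∀ z, Γ ξ (γ • z) = γ • Γ ξ z)
    (hΓ : IsClosed {p : (X × Z) × V | p.2 ∈ Γ p.1.1 p.1.2})
    (hΓ0 : Γ ξ 0 ⊆ {0}) (hΓz : (0 : V) ∉ Γ ξ z) (hne : (Γ ξ z).Nonempty)
    {ξs : ℕ → X} {zs : ℕ → Z} {ηs : ℕ → V}
    (hξ : Tendsto ξs atTop (𝓝 ξ)) (hz : Tendsto zs atTop (𝓝 z)) (hη : Tendsto ηs atTop (𝓝 η))
    (hmem : ∀ j, ηs j ∈ coneHull (Γ (ξs j) (zs j))) :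
    η ∈ coneHull (Γ ξ z) := by
  choose γ hγ w hw hηw using hmem
  obtain rfl : ηs = fun j => γ j • w j := funext hηw
  have hzero := zero_mem_coneHull hne
  rcases Real.tendsto_atTop_or_exists_subseq_tendsto hγ with htop | ⟨c, hc, φ, hφ, hlim⟩
  · refine absurd ?_ hΓz
    simpa using smul_mem_of_isClosed_graph_of_tendsto_inv hΓ hξ hz hw hη
      htop.inv_tendsto_atTop ((htop.eventually_gt_atTop 0).mono fun j hj => hj.ne')
  have hφ' := hφ.tendsto_atTop
  rcases hc.eq_or_lt with rfl | hc
  · rcases eq_zero_or_mem_zero_of_isClosed_graph_of_tendsto_zero hpos hΓ (hξ.comp hφ')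
      (hz.comp hφ') (fun j => hw (φ j)) (hη.comp hφ') (fun j => hγ (φ j)) hlim with h | h
    · exact h ▸ hzero
    · exact hΓ0 h ▸ hzero
  · have hmem := smul_mem_of_isClosed_graph_of_tendsto_inv hΓ (hξ.comp hφ') (hz.comp hφ')
      (fun j => hw (φ j)) (hη.comp hφ') (hlim.inv₀ hc.ne')
      ((hlim.eventually_const_lt hc).mono fun j hj => hj.ne')
    exact ⟨c, hc.le, c⁻¹ • η, hmem, by rw [smul_smul, mul_inv_cancel₀ hc.ne', one_smul]⟩

end ClosedGraph

/-- Let `Γ(ξ,·)` be positively homogeneous for each `ξ`, with closed graph,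
and suppose `H(z) := Γ(ξ̄,z) = {0} × 𝒯(z)` where `𝒯(0) = {0}` and `𝒯⁻¹(0) = {0}`.
Then `𝒦(ξ,z) := cone(Γ(ξ,z))` is outer semicontinuous relative to `ℝᵏ × bd 𝔹` at
`(ξ̄, z)` for every unit vector `z ∈ dom H`. -/
theorem coneHull_map_outer_semicontinuous {k m s r : ℕ}
    (Γ : EuclideanSpace ℝ (Fin k) → EuclideanSpace ℝ (Fin m) →
      Set (EuclideanSpace ℝ (Fin s) × EuclideanSpace ℝ (Fin r)))
    (T : EuclideanSpace ℝ (Fin m) → Set (EuclideanSpace ℝ (Fin r)))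
    (xb : EuclideanSpace ℝ (Fin k))
    (hpos : ∀ ξ, ∀ γ : ℝ, 0 < γ → ∀ z, Γ ξ (γ • z) = γ • Γ ξ z)
    (hclosed : IsClosed
      {p : (EuclideanSpace ℝ (Fin k) × EuclideanSpace ℝ (Fin m)) ×
        (EuclideanSpace ℝ (Fin s) × EuclideanSpace ℝ (Fin r)) | p.2 ∈ Γ p.1.1 p.1.2})
    (hstruct : ∀ z, Γ xb z = {(0 : EuclideanSpace ℝ (Fin s))} ×ˢ T z)
    (hT0 : T 0 = {0})
    (hTinv : ∀ z, (0 : EuclideanSpace ℝ (Fin r)) ∈ T z → z = 0) :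
    ∀ z : EuclideanSpace ℝ (Fin m), ‖z‖ = 1 → (Γ xb z).Nonempty →
      ∀ (ξs : ℕ → EuclideanSpace ℝ (Fin k)) (zs : ℕ → EuclideanSpace ℝ (Fin m))
        (ηs : ℕ → EuclideanSpace ℝ (Fin s) × EuclideanSpace ℝ (Fin r))
        (η : EuclideanSpace ℝ (Fin s) × EuclideanSpace ℝ (Fin r)),
        (∀ j, ‖zs j‖ = 1) →
        (∀ j, ηs j ∈ coneHull (Γ (ξs j) (zs j))) →
        Tendsto ξs atTop (nhds xb) → Tendsto zs atTop (nhds z) →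
        Tendsto ηs atTop (nhds η) →
        η ∈ coneHull (Γ xb z) := by
  intro z hz hne ξs zs ηs η _ hmem hξ hzs hη
  have hΓ0 : Γ xb 0 ⊆ {0} := by
    rw [hstruct, hT0, Set.singleton_prod_singleton, Prod.mk_zero_zero]
  have hΓz : 0 ∉ Γ xb z := fun h0 => by
    rw [hstruct] at h0
    simp [hTinv z h0.2] at hz
  exact mem_coneHull_of_isClosed_graph_of_tendsto hpos hclosed hΓ0 hΓz hne hξ hzs hη hmem
end

section
/- Let F : ℝⁿ → ℝᵐ be strictly differentiable at x̄ and C : ℝⁿ ⇉ ℝᵐ closed-graph with (x̄,ȳ) ∈ gph C. Suppose there exists (v̄,z̄) ≠ (0,0) with (v̄,−z̄) ∈ N_{gph C}(x̄,ȳ) and ∇F(x̄)z̄ + v̄ = 0 (i.e., the regularity modulus R_𝒬 of the associated mapping vanishes). Then z̄ ≠ 0 and 0 ∈ ∇F(x̄)z̄ + D*C(x̄|ȳ)(z̄), hence inf_{‖z‖=1} dist[0, ∇F(x̄)z + D*C(x̄|ȳ)(z)] = 0. -/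
open Filter Topology Pointwise

/-- The (Bouligand–Severi) tangent/contingent cone to `C` at `x`:
`v ∈ T_C(x)` iff there are `tₖ ↓ 0` and `wₖ → v` with `x + tₖ • wₖ ∈ C`. -/
def tangentConeAtPt {E : Type*} [AddCommGroup E] [Module ℝ E] [TopologicalSpace E]
    (C : Set E) (x : E) : Set E :=
  {v | ∃ t : ℕ → ℝ, ∃ w : ℕ → E, (∀ j, 0 < t j) ∧
    Tendsto t atTop (nhds 0) ∧ Tendsto w atTop (nhds v) ∧ ∀ j, x + t j • w j ∈ C}

/-- The polar cone of `T` with respect to the pairing `ip`. -/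
def polarConeWith {E : Type*} (ip : E → E → ℝ) (T : Set E) : Set E :=
  {v | ∀ w ∈ T, ip v w ≤ 0}

/-- The limiting (Mordukhovich) normal cone to `C` at `x̄`, with respect to the
pairing `ip`: all limits of polars of tangent cones at points of `C` tending to `x̄`. -/
def limNormalCone {E : Type*} [AddCommGroup E] [Module ℝ E] [TopologicalSpace E]
    (ip : E → E → ℝ) (C : Set E) (xb : E) : Set E :=
  {v | ∃ x : ℕ → E, ∃ vs : ℕ → E, (∀ j, x j ∈ C) ∧
    (∀ j, vs j ∈ polarConeWith ip (tangentConeAtPt C (x j))) ∧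
    Tendsto x atTop (nhds xb) ∧ Tendsto vs atTop (nhds v)}

/-- The coderivative `D*S(x̄|ȳ)(z) = {v | (v, −z) ∈ N_{gph S}(x̄, ȳ)}`. -/
def coderivWith {E F : Type*} [AddCommGroup E] [Module ℝ E] [TopologicalSpace E]
    [AddCommGroup F] [Module ℝ F] [TopologicalSpace F]
    (ipE : E → E → ℝ) (ipF : F → F → ℝ)
    (S : E → Set F) (xb : E) (yb : F) (z : F) : Set E :=
  {v | (v, -z) ∈ limNormalCone (fun p q => ipE p.1 q.1 + ipF p.2 q.2)
    {p : E × F | p.2 ∈ S p.1} (xb, yb)}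

/-- The Euclidean inner product pairing. -/
noncomputable def eip {E : Type*} [NormedAddCommGroup E] [InnerProductSpace ℝ E] :
    E → E → ℝ := fun v w => inner ℝ v w

/-! A multiplier with `z̄ = 0` would force `v̄ = -∇F(x̄)·0 = 0`, so `z̄ ≠ 0` and `v̄ ∈ D*C(x̄|ȳ)(z̄)`.
Limiting normal cones are cones, so the coderivative is positively homogeneous and
`‖z̄‖⁻¹ • v̄ ∈ D*C(x̄|ȳ)(‖z̄‖⁻¹ • z̄)` exhibits a unit direction at which the distance vanishes. -/

section Homogeneity

variable {E F : Type*} [AddCommGroup E] [Module ℝ E] [AddCommGroup F] [Module ℝ F]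

theorem smul_mem_polarConeWith {ip : E → E → ℝ} (hip : ∀ (c : ℝ) v w, ip (c • v) w = c * ip v w)
    {T : Set E} {c : ℝ} (hc : 0 ≤ c) {v : E} (hv : v ∈ polarConeWith ip T) :
    c • v ∈ polarConeWith ip T := fun w hw => by
  rw [hip]
  exact mul_nonpos_of_nonneg_of_nonpos hc (hv w hw)

variable [TopologicalSpace E] [TopologicalSpace F]

theorem smul_mem_limNormalCone [ContinuousConstSMul ℝ E] {ip : E → E → ℝ}
    (hip : ∀ (c : ℝ) v w, ip (c • v) w = c * ip v w) {C : Set E} {xb : E} {c : ℝ} (hc : 0 ≤ c)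
    {v : E} (hv : v ∈ limNormalCone ip C xb) : c • v ∈ limNormalCone ip C xb := by
  obtain ⟨x, vs, hxC, hpol, hx, hvs⟩ := hv
  exact ⟨x, fun j => c • vs j, hxC, fun j => smul_mem_polarConeWith hip hc (hpol j), hx,
    hvs.const_smul c⟩

theorem smul_mem_coderivWith [ContinuousConstSMul ℝ E] [ContinuousConstSMul ℝ F]
    {ipE : E → E → ℝ} {ipF : F → F → ℝ} (hipE : ∀ (c : ℝ) v w, ipE (c • v) w = c * ipE v w)
    (hipF : ∀ (c : ℝ) v w, ipF (c • v) w = c * ipF v w) {S : E → Set F} {xb : E} {yb : F}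
    {c : ℝ} (hc : 0 ≤ c) {v : E} {z : F} (hv : v ∈ coderivWith ipE ipF S xb yb z) :
    c • v ∈ coderivWith ipE ipF S xb yb (c • z) := by
  have hip : ∀ (c : ℝ) (p q : E × F),
      ipE (c • p).1 q.1 + ipF (c • p).2 q.2 = c * (ipE p.1 q.1 + ipF p.2 q.2) := by
    intro c p q
    rw [Prod.smul_fst, Prod.smul_snd, hipE, hipF, mul_add]
  have := smul_mem_limNormalCone hip hc hv
  rwa [Prod.smul_mk, smul_neg] at this

end Homogeneity

theorem eip_smul_left {E : Type*} [NormedAddCommGroup E] [InnerProductSpace ℝ E]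
    (c : ℝ) (v w : E) : eip (c • v) w = c * eip v w :=
  real_inner_smul_left v w c

theorem RQ_zero_implies_RSigma_zero_general {n m : ℕ}
    (A : EuclideanSpace ℝ (Fin n) →L[ℝ] EuclideanSpace ℝ (Fin m))
    (xb : EuclideanSpace ℝ (Fin n))
    (C : EuclideanSpace ℝ (Fin n) → Set (EuclideanSpace ℝ (Fin m)))
    (yb : EuclideanSpace ℝ (Fin m))
    (vb : EuclideanSpace ℝ (Fin n)) (zb : EuclideanSpace ℝ (Fin m))
    (hne : (vb, zb) ≠ 0)
    (hmem : (vb, -zb) ∈ limNormalCone (fun a b => eip a.1 b.1 + eip a.2 b.2)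
      {a : EuclideanSpace ℝ (Fin n) × EuclideanSpace ℝ (Fin m) | a.2 ∈ C a.1} (xb, yb))
    (heq : ContinuousLinearMap.adjoint A zb + vb = 0) :
    zb ≠ 0 ∧
    (0 : EuclideanSpace ℝ (Fin n)) ∈
      (fun v => ContinuousLinearMap.adjoint A zb + v) '' coderivWith eip eip C xb yb zb ∧
    (⨅ z ∈ {z : EuclideanSpace ℝ (Fin m) | ‖z‖ = 1},
        EMetric.infEdist (0 : EuclideanSpace ℝ (Fin n))
          ((fun v => ContinuousLinearMap.adjoint A z + v) ''
            coderivWith eip eip C xb yb z)) = 0 := by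
  have hzb : zb ≠ 0 := by
    rintro rfl
    rw [map_zero, zero_add] at heq
    exact hne (by rw [heq]; rfl)
  have hvb : vb ∈ coderivWith eip eip C xb yb zb := hmem
  refine ⟨hzb, ⟨vb, hvb, heq⟩, le_antisymm ?_ zero_le⟩
  set c : ℝ := ‖zb‖⁻¹
  have hunit : ‖c • zb‖ = 1 := norm_smul_inv_norm hzb
  have hcv : c • vb ∈ coderivWith eip eip C xb yb (c • zb) :=
    smul_mem_coderivWith eip_smul_left eip_smul_left (by positivity) hvb
  have hzero : (0 : EuclideanSpace ℝ (Fin n)) ∈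
      (fun v => ContinuousLinearMap.adjoint A (c • zb) + v) '' coderivWith eip eip C xb yb (c • zb) :=
    ⟨c • vb, hcv, by simp only [map_smul, ← smul_add, heq, smul_zero]⟩
  exact (iInf₂_le (c • zb) hunit).trans (Metric.infEDist_zero_of_mem hzero).le

/-- If there exists `(v̄,z̄) ≠ (0,0)` with `(v̄,−z̄) ∈ N_{gph C}(x̄,ȳ)`
and `∇F(x̄)z̄ + v̄ = 0`, then `z̄ ≠ 0`, `0 ∈ ∇F(x̄)z̄ + D*C(x̄|ȳ)(z̄)`, and
`inf_{‖z‖=1} dist[0, ∇F(x̄)z + D*C(x̄|ȳ)(z)] = 0`. -/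
theorem RQ_zero_implies_RSigma_zero {n m : ℕ}
    (F : EuclideanSpace ℝ (Fin n) → EuclideanSpace ℝ (Fin m))
    (A : EuclideanSpace ℝ (Fin n) →L[ℝ] EuclideanSpace ℝ (Fin m))
    (xb : EuclideanSpace ℝ (Fin n)) (hF : HasStrictFDerivAt F A xb)
    (C : EuclideanSpace ℝ (Fin n) → Set (EuclideanSpace ℝ (Fin m)))
    (hC : IsClosed {a : EuclideanSpace ℝ (Fin n) × EuclideanSpace ℝ (Fin m) |
      a.2 ∈ C a.1})
    (yb : EuclideanSpace ℝ (Fin m)) (hyb : yb ∈ C xb)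
    (vb : EuclideanSpace ℝ (Fin n)) (zb : EuclideanSpace ℝ (Fin m))
    (hne : (vb, zb) ≠ 0)
    (hmem : (vb, -zb) ∈ limNormalCone (fun a b => eip a.1 b.1 + eip a.2 b.2)
      {a : EuclideanSpace ℝ (Fin n) × EuclideanSpace ℝ (Fin m) | a.2 ∈ C a.1} (xb, yb))
    (heq : ContinuousLinearMap.adjoint A zb + vb = 0) :
    zb ≠ 0 ∧
    (0 : EuclideanSpace ℝ (Fin n)) ∈
      (fun v => ContinuousLinearMap.adjoint A zb + v) '' coderivWith eip eip C xb yb zb ∧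
    (⨅ z ∈ {z : EuclideanSpace ℝ (Fin m) | ‖z‖ = 1},
        EMetric.infEdist (0 : EuclideanSpace ℝ (Fin n))
          ((fun v => ContinuousLinearMap.adjoint A z + v) ''
            coderivWith eip eip C xb yb z)) = 0 :=
  RQ_zero_implies_RSigma_zero_general A xb C yb vb zb hne hmem heq
end
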